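/- arXiv:2208.14351 — 2 statements merged into one kernel-verified Lean document; each statement's English description precedes it below -/
import Mathlib

section
/- Let λ ≤ ν and μ ≤ ν be set partitions of [n]. Then the Young subgroup S_ν decomposes as a disjoint union of (S_μ, S_λ)-double cosets S_ν = ⨆_z S_μ z S_λ, and for each double coset representative z, S_μ ∩ z S_λ z^{-1} = S_{μ ∧ zλ}. -/
/-- The Young subgroup of `S_n` associated to a set partition of `Fin n`. -/
def youngSubgroup {n : ℕ} (σ : Setoid (Fin n)) : Subgroup (Equiv.Perm (Fin n)) where
  carrier := {w | ∀ i, σ.r (w i) i}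
  one_mem' := fun _ => σ.refl _
  mul_mem' := fun {a b} ha hb i => σ.trans (ha (b i)) (hb i)
  inv_mem' := fun {a} ha i => σ.symm (by simpa using ha (a⁻¹ i))

/-- The action of `S_n` on set partitions of `[n]`. -/
def permSetoid {n : ℕ} (w : Equiv.Perm (Fin n)) (σ : Setoid (Fin n)) : Setoid (Fin n) :=
  ⟨fun i j => σ.r (w⁻¹ i) (w⁻¹ j),
    ⟨fun _ => σ.refl _, fun h => σ.symm h, fun h h' => σ.trans h h'⟩⟩

/-- The double coset `S_μ z S_λ`, as a subset of `S_n`. -/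
def doubleCoset {n : ℕ} (mu lam : Setoid (Fin n)) (z : Equiv.Perm (Fin n)) :
    Set (Equiv.Perm (Fin n)) :=
  {g | ∃ a ∈ youngSubgroup mu, ∃ b ∈ youngSubgroup lam, g = a * z * b}

/-! Since `S_μ` and `S_λ` lie in `S_ν`, the double coset of any `z ∈ S_ν` stays inside `S_ν`,
and double cosets of a pair of subgroups partition the group. For the intersection formula,
conjugation by `z` carries `S_λ` onto `S_{zλ}`, and `S_σ ∩ S_τ = S_{σ ∧ τ}` because a permutation
preserves the blocks of `σ ∧ τ` exactly when it preserves those of `σ` and of `τ`. -/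

section

variable {n : ℕ}

theorem youngSubgroup_mono {σ τ : Setoid (Fin n)} (h : σ ≤ τ) :
    youngSubgroup σ ≤ youngSubgroup τ :=
  fun _ hw i => h (hw i)

theorem youngSubgroup_inf (σ τ : Setoid (Fin n)) :
    youngSubgroup (σ ⊓ τ) = youngSubgroup σ ⊓ youngSubgroup τ :=
  Subgroup.ext fun _ => forall_and

theorem map_conj_youngSubgroup (z : Equiv.Perm (Fin n)) (σ : Setoid (Fin n)) :
    (youngSubgroup σ).map (MulAut.conj z).toMonoidHom = youngSubgroup (permSetoid z σ) := by
  ext g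
  rw [Subgroup.mem_map_equiv, MulAut.conj_symm_apply]
  refine Iff.trans (forall_congr' fun i => ?_) z.forall_congr_right
  change _ ↔ σ.r (z⁻¹ (g (z i))) (z⁻¹ (z i))
  simp

theorem doubleCoset_eq_doubleCoset_youngSubgroup (mu lam : Setoid (Fin n))
    (z : Equiv.Perm (Fin n)) :
    doubleCoset mu lam z = DoubleCoset.doubleCoset z (youngSubgroup mu) (youngSubgroup lam) := by
  ext g
  exact DoubleCoset.mem_doubleCoset.symm

theorem doubleCoset_subset_youngSubgroup {lam mu nu : Setoid (Fin n)} (hlam : lam ≤ nu)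
    (hmu : mu ≤ nu) {z : Equiv.Perm (Fin n)} (hz : z ∈ youngSubgroup nu) :
    doubleCoset mu lam z ⊆ youngSubgroup nu := by
  rintro _ ⟨a, ha, b, hb, rfl⟩
  exact mul_mem (mul_mem (youngSubgroup_mono hmu ha) hz) (youngSubgroup_mono hlam hb)

theorem doubleCoset_eq_or_disjoint (mu lam : Setoid (Fin n)) (z z' : Equiv.Perm (Fin n)) :
    doubleCoset mu lam z = doubleCoset mu lam z' ∨
      Disjoint (doubleCoset mu lam z) (doubleCoset mu lam z') := by
  simp only [doubleCoset_eq_doubleCoset_youngSubgroup]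
  exact or_iff_not_imp_right.2 DoubleCoset.eq_of_not_disjoint

end

/-- Let `λ ≤ ν` and `μ ≤ ν` be set partitions of `[n]` (in refinement
order). Then `S_ν` decomposes as the disjoint union of the `(S_μ, S_λ)`-double cosets of its
elements, and for each `z ∈ S_ν` (in particular for each double coset representative),
`S_μ ∩ z S_λ z⁻¹ = S_{μ ∧ zλ}`. -/
theorem youngSubgroup_doubleCoset_decomposition {n : ℕ} (lam mu nu : Setoid (Fin n))
    (hlam : lam ≤ nu) (hmu : mu ≤ nu) :
    ((youngSubgroup nu : Set (Equiv.Perm (Fin n))) =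
        ⋃ z ∈ youngSubgroup nu, doubleCoset mu lam z) ∧
      (∀ z ∈ youngSubgroup nu, ∀ z' ∈ youngSubgroup nu,
        doubleCoset mu lam z = doubleCoset mu lam z' ∨
          Disjoint (doubleCoset mu lam z) (doubleCoset mu lam z')) ∧
      (∀ z ∈ youngSubgroup nu,
        youngSubgroup mu ⊓ Subgroup.map (MulAut.conj z).toMonoidHom (youngSubgroup lam) =
          youngSubgroup (mu ⊓ permSetoid z lam)) := by
  refine ⟨?_, fun z _ z' _ => doubleCoset_eq_or_disjoint mu lam z z', fun z _ => ?_⟩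
  · refine Set.Subset.antisymm (fun g hg => Set.mem_iUnion₂.2 ⟨g, hg, ?_⟩)
      (Set.iUnion₂_subset fun z hz => doubleCoset_subset_youngSubgroup hlam hmu hz)
    rw [doubleCoset_eq_doubleCoset_youngSubgroup]
    exact DoubleCoset.mem_doubleCoset_self _ _ g
  · rw [map_conj_youngSubgroup, youngSubgroup_inf]
end

section
/- In the character ring R(S_n) ⊗_ℤ k over a field k of characteristic 0, the classes [Ind_{S_λ}^{S_n} 1] of the trivial modules induced from Young subgroups, as λ ranges over integer partitions of n (with one set-partition representative each), form a k-basis; in particular dim_k R(S_n) ⊗ k = p(n), the number of partitions of n. -/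
set_option synthInstance.maxHeartbeats 400000
set_option maxHeartbeats 1000000

/-- The permutation character of `S_n` acting on the right coset space `S_λ\S_n`, with
values in `k`: its value at `g` is the number of cosets fixed by right translation by `g`.
This is the character of `Ind_{S_λ}^{S_n} 1`. -/
noncomputable def permChar (k : Type) [Field k] {n : ℕ} (σ : Setoid (Fin n)) :
    Equiv.Perm (Fin n) → k := fun g =>
  (Nat.card {y : Quotient (QuotientGroup.rightRel (youngSubgroup σ)) //
      Quotient.map (· * g)
        (fun a b h => QuotientGroup.rightRel_apply.mpr
          (by simpa [mul_assoc] using QuotientGroup.rightRel_apply.mp h)) y = y} : k)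

/-- The space of `k`-valued class functions on `S_n`; over a field of characteristic zero
this is the image of `R(S_n) ⊗_ℤ k`, spanned by the (virtual) characters. -/
def classFunctions (k : Type) [Field k] (n : ℕ) : Submodule k (Equiv.Perm (Fin n) → k) where
  carrier := {f | ∀ g h : Equiv.Perm (Fin n), f (h * g * h⁻¹) = f g}
  add_mem' := by
    intro a b ha hb g h
    show a (h * g * h⁻¹) + b (h * g * h⁻¹) = a g + b g
    rw [ha g h, hb g h]
  zero_mem' := fun _ _ => rfl
  smul_mem' := by
    intro c f hf g h
    show c * f (h * g * h⁻¹) = c * f g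
    rw [hf g h]

/-!
If the cycles of `g` are the blocks of `σ`, then `permChar k τ g ≠ 0` means that a conjugate of
`g` lies in the Young subgroup of `τ`, i.e. `τ` is coarser than a translate of `σ`; so `τ` has at
most as many blocks as `σ`, with equality only for translates of `σ`. Hence the permutation
characters of pairwise non-conjugate set partitions are triangular and linearly independent.
There are `p(n)` of them in the space of class functions, whose dimension is the number of
conjugacy classes of `S_n`, at most `p(n)` by cycle type; so they form a basis.
-/

open Equiv Equiv.Perm

theorem Setoid.eq_of_le_of_card_quotient_le {α : Type*} [Finite α] {σ τ : Setoid α}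
    (hle : σ ≤ τ) (hcard : Nat.card (Quotient σ) ≤ Nat.card (Quotient τ)) : σ = τ := by
  have hsurj : Function.Surjective (Quot.mapRight (ra := σ) (ra' := τ) fun _ _ h => hle h) := by
    rintro ⟨a⟩; exact ⟨Quot.mk _ a, rfl⟩
  have hinj := (hsurj.bijective_of_nat_card_le hcard).1
  exact Setoid.ext fun a b => ⟨(hle ·), fun h => Quotient.exact (hinj (Quotient.sound h))⟩

namespace Equiv.Perm

variable {α β : Type*}

theorem sameCycle_permCongr (e : α ≃ β) (f : Perm α) {x y : α} :
    (e.permCongr f).SameCycle (e x) (e y) ↔ f.SameCycle x y :=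
  exists_congr fun i => by
    rw [← permCongrHom_coe, ← map_zpow, permCongrHom_coe, permCongr_apply, symm_apply_apply,
      e.apply_eq_iff_eq]

theorem sameCycle_finRotate {m : ℕ} (a b : Fin m) : (finRotate m).SameCycle a b := by
  rcases lt_or_ge m 2 with hm | hm
  · have : Subsingleton (Fin m) := Fin.subsingleton_iff_le_one.2 (by omega)
    exact Subsingleton.elim a b ▸ SameCycle.refl _ _
  · have hsupp := support_finRotate_of_le hm
    exact (isCycle_finRotate_of_le hm).sameCycle (mem_support.1 (hsupp ▸ Finset.mem_univ a))
      (mem_support.1 (hsupp ▸ Finset.mem_univ b))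

variable (β) in
theorem exists_forall_sameCycle [Finite β] : ∃ f : Perm β, ∀ x y, f.SameCycle x y := by
  let e := (Finite.equivFin β).symm
  refine ⟨e.permCongr (finRotate _), fun x y => ?_⟩
  rw [← e.apply_symm_apply x, ← e.apply_symm_apply y, sameCycle_permCongr]
  exact sameCycle_finRotate _ _

theorem sameCycle_sigmaCongrRight_iff {π : α → Type*} {f : ∀ a, Perm (π a)}
    (hf : ∀ a x y, (f a).SameCycle x y) {p q : Σ a, π a} :
    (sigmaCongrRight f).SameCycle p q ↔ p.1 = q.1 := by
  have hpow : ∀ i : ℤ, sigmaCongrRight f ^ i = sigmaCongrRight (f ^ i) := fun i =>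
    (map_zpow (sigmaCongrRightHom π) f i).symm
  obtain ⟨a, x⟩ := p
  obtain ⟨b, y⟩ := q
  constructor
  · rintro ⟨i, hi⟩
    rw [hpow, sigmaCongrRight_apply] at hi
    exact (Sigma.mk.inj_iff.1 hi).1
  · rintro (rfl : a = b)
    obtain ⟨i, hi⟩ := hf a x y
    exact ⟨i, by rw [hpow, sigmaCongrRight_apply, Pi.pow_apply, hi]⟩

theorem exists_sameCycle_setoid_eq [Finite α] (σ : Setoid α) :
    ∃ g : Perm α, SameCycle.setoid g = σ := by
  choose f hf using fun q : Quotient σ => exists_forall_sameCycle {i // Quotient.mk σ i = q}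
  let e := sigmaFiberEquiv (Quotient.mk σ)
  refine ⟨e.permCongr (sigmaCongrRight f), Setoid.ext fun i j => ?_⟩
  calc (e.permCongr (sigmaCongrRight f)).SameCycle i j
      ↔ (sigmaCongrRight f).SameCycle (e.symm i) (e.symm j) := by
        rw [← sameCycle_permCongr e, e.apply_symm_apply, e.apply_symm_apply]
    _ ↔ Quotient.mk σ i = Quotient.mk σ j := sameCycle_sigmaCongrRight_iff hf
    _ ↔ σ i j := Quotient.eq

theorem card_conjClasses_le [Fintype α] [DecidableEq α] :
    Nat.card (ConjClasses (Perm α)) ≤ Nat.card (Fintype.card α).Partition := by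
  refine Nat.card_le_card_of_injective (Quotient.lift partition fun _ _ => partition_eq_of_isConj.1)
    ?_
  rintro ⟨a⟩ ⟨b⟩ hab
  exact Quotient.sound (partition_eq_of_isConj.2 hab)

end Equiv.Perm

section YoungSubgroup

variable {n : ℕ}

theorem sameCycle_setoid_le_iff_mem_youngSubgroup {σ : Setoid (Fin n)} {g : Perm (Fin n)} :
    SameCycle.setoid g ≤ σ ↔ g ∈ youngSubgroup σ := by
  refine ⟨fun h i => h (sameCycle_apply_left.2 (SameCycle.refl g i)), ?_⟩
  rintro hg i j ⟨m, rfl⟩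
  exact σ.symm ((youngSubgroup σ).zpow_mem hg m i)

theorem sameCycle_setoid_conj (x g : Perm (Fin n)) :
    SameCycle.setoid (x * g * x⁻¹) = permSetoid x (SameCycle.setoid g) :=
  Setoid.ext fun _ _ => sameCycle_conj

theorem permSetoid_one (σ : Setoid (Fin n)) : permSetoid 1 σ = σ :=
  Setoid.ext fun _ _ => Iff.rfl

theorem card_quotient_permSetoid (w : Perm (Fin n)) (σ : Setoid (Fin n)) :
    Nat.card (Quotient (permSetoid w σ)) = Nat.card (Quotient σ) :=
  Nat.card_congr (Quotient.congr w⁻¹ fun _ _ => Iff.rfl)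

end YoungSubgroup

section PermChar

variable {n : ℕ} (k : Type) [Field k]

def rightCosetMul (σ : Setoid (Fin n)) (u : Perm (Fin n)) :
    Quotient (QuotientGroup.rightRel (youngSubgroup σ)) →
      Quotient (QuotientGroup.rightRel (youngSubgroup σ)) :=
  Quotient.map (· * u)
    (fun a b h => QuotientGroup.rightRel_apply.mpr
      (by simpa [mul_assoc] using QuotientGroup.rightRel_apply.mp h))

theorem rightCosetMul_rightCosetMul (σ : Setoid (Fin n)) (u v : Perm (Fin n)) (y) :
    rightCosetMul σ u (rightCosetMul σ v y) = rightCosetMul σ (v * u) y := by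
  induction y using Quotient.inductionOn with
  | h x => exact congrArg (Quotient.mk _) (mul_assoc x v u)

theorem rightCosetMul_one (σ : Setoid (Fin n)) (y) : rightCosetMul σ 1 y = y := by
  induction y using Quotient.inductionOn with
  | h x => exact congrArg (Quotient.mk _) (mul_one x)

theorem permChar_apply (σ : Setoid (Fin n)) (g : Perm (Fin n)) :
    permChar k σ g = (Nat.card {y // rightCosetMul σ g y = y} : k) := rfl

def fixedCosetsConjEquiv (σ : Setoid (Fin n)) (g h : Perm (Fin n)) :
    {y // rightCosetMul σ (h * g * h⁻¹) y = y} ≃ {y // rightCosetMul σ g y = y} where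
  toFun y := ⟨rightCosetMul σ h y.1, by
    conv_rhs => rw [← y.2]
    rw [rightCosetMul_rightCosetMul, rightCosetMul_rightCosetMul, inv_mul_cancel_right]⟩
  invFun z := ⟨rightCosetMul σ h⁻¹ z.1, by
    conv_rhs => rw [← z.2]
    rw [rightCosetMul_rightCosetMul, rightCosetMul_rightCosetMul]
    group⟩
  left_inv y := Subtype.ext <| by
    dsimp only
    rw [rightCosetMul_rightCosetMul, mul_inv_cancel, rightCosetMul_one]
  right_inv z := Subtype.ext <| by
    dsimp only
    rw [rightCosetMul_rightCosetMul, inv_mul_cancel, rightCosetMul_one]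

theorem permChar_mem_classFunctions (σ : Setoid (Fin n)) : permChar k σ ∈ classFunctions k n :=
  fun g h => congrArg Nat.cast (Nat.card_congr (fixedCosetsConjEquiv σ g h))

theorem exists_rightCosetMul_eq_self_iff (σ : Setoid (Fin n)) (g : Perm (Fin n)) :
    (∃ y, rightCosetMul σ g y = y) ↔ ∃ x : Perm (Fin n), x * g * x⁻¹ ∈ youngSubgroup σ := by
  constructor
  · rintro ⟨y, hy⟩
    induction y using Quotient.inductionOn with
    | h x =>
      have hx := QuotientGroup.rightRel_apply.mp (Quotient.exact hy)
      exact ⟨x, by simpa [mul_assoc] using (youngSubgroup σ).inv_mem hx⟩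
  · rintro ⟨x, hx⟩
    refine ⟨Quotient.mk _ x, Quotient.sound (QuotientGroup.rightRel_apply.mpr ?_)⟩
    simpa [mul_assoc] using (youngSubgroup σ).inv_mem hx

theorem permChar_ne_zero_iff [CharZero k] (σ : Setoid (Fin n)) (g : Perm (Fin n)) :
    permChar k σ g ≠ 0 ↔ ∃ x : Perm (Fin n), x * g * x⁻¹ ∈ youngSubgroup σ := by
  rw [permChar_apply, Nat.cast_ne_zero, Nat.card_ne_zero, and_iff_left Subtype.finite,
    nonempty_subtype, exists_rightCosetMul_eq_self_iff]

variable {k} [CharZero k]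

theorem permChar_ne_zero_of_sameCycle_setoid_eq {σ : Setoid (Fin n)} {g : Perm (Fin n)}
    (hg : SameCycle.setoid g = σ) : permChar k σ g ≠ 0 :=
  (permChar_ne_zero_iff k σ g).2
    ⟨1, by simpa using sameCycle_setoid_le_iff_mem_youngSubgroup.1 hg.le⟩

theorem exists_permSetoid_eq_of_permChar_ne_zero {σ τ : Setoid (Fin n)} {g : Perm (Fin n)}
    (hg : SameCycle.setoid g = σ) (hτ : permChar k τ g ≠ 0)
    (hcard : Nat.card (Quotient σ) ≤ Nat.card (Quotient τ)) : ∃ w, permSetoid w σ = τ := by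
  obtain ⟨x, hx⟩ := (permChar_ne_zero_iff k τ g).1 hτ
  have hconj : SameCycle.setoid (x * g * x⁻¹) = permSetoid x σ := hg ▸ sameCycle_setoid_conj x g
  refine ⟨x, Setoid.eq_of_le_of_card_quotient_le ?_ ?_⟩
  · exact hconj ▸ sameCycle_setoid_le_iff_mem_youngSubgroup.2 hx
  · rwa [card_quotient_permSetoid]

theorem linearIndependent_permChar {ι : Type*} {c : ι → Setoid (Fin n)}
    (hc : ∀ i j w, permSetoid w (c i) = c j → i = j) :
    LinearIndependent k fun i => permChar k (c i) := by
  classical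
  rw [linearIndependent_iff']
  intro s a hsum
  by_contra! hne
  -- evaluate the relation at a permutation whose cycles are the blocks of a coarsest `c i₀`
  obtain ⟨i₀, hi₀, hmin⟩ := (s.filter (a · ≠ 0)).exists_min_image
    (fun i => Nat.card (Quotient (c i))) (by simpa [Finset.filter_nonempty_iff] using hne)
  obtain ⟨hi₀s, hai₀⟩ := Finset.mem_filter.1 hi₀
  obtain ⟨g, hg⟩ := exists_sameCycle_setoid_eq (c i₀)
  have hvanish : ∀ j ∈ s, j ≠ i₀ → a j * permChar k (c j) g = 0 := by
    intro j hjs hji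
    by_contra hχ
    obtain ⟨haj, hχ⟩ := mul_ne_zero_iff.1 hχ
    obtain ⟨w, hw⟩ := exists_permSetoid_eq_of_permChar_ne_zero hg hχ
      (hmin j (Finset.mem_filter.2 ⟨hjs, haj⟩))
    exact hji (hc _ _ w hw).symm
  have hg0 := congrFun hsum g
  simp only [Finset.sum_apply, Pi.smul_apply, smul_eq_mul, Pi.zero_apply] at hg0
  rw [Finset.sum_eq_single_of_mem i₀ hi₀s hvanish] at hg0
  exact mul_ne_zero hai₀ (permChar_ne_zero_of_sameCycle_setoid_eq hg) hg0

end PermChar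

theorem classFunctions_eq_range_funLeft (k : Type) [Field k] (n : ℕ) :
    classFunctions k n = LinearMap.range
      (LinearMap.funLeft k k (ConjClasses.mk : Perm (Fin n) → ConjClasses (Perm (Fin n)))) := by
  ext f
  constructor
  · intro hf
    refine ⟨Quotient.lift f fun a b hab => ?_, rfl⟩
    obtain ⟨u, rfl⟩ := isConj_iff.1 hab
    exact (hf a u).symm
  · rintro ⟨φ, rfl⟩ g h
    exact congrArg φ (ConjClasses.mk_eq_mk_iff_isConj.2 (isConj_iff.2 ⟨h⁻¹, by group⟩))

theorem finrank_classFunctions (k : Type) [Field k] (n : ℕ) :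
    Module.finrank k (classFunctions k n) = Nat.card (ConjClasses (Perm (Fin n))) := by
  have : Fintype (ConjClasses (Perm (Fin n))) := Fintype.ofFinite _
  rw [classFunctions_eq_range_funLeft, LinearMap.finrank_range_of_inj
    (LinearMap.funLeft_injective_of_surjective k k _ ConjClasses.mk_surjective),
    Module.finrank_fintype_fun_eq_card, Nat.card_eq_fintype_card]

/-- Over a field `k` of characteristic `0`, the classes
`[Ind_{S_λ}^{S_n} 1]` of the trivial modules induced from Young subgroups — one set
partition `c(P)` chosen for each `S_n`-orbit, i.e. for each integer partition `P` of `n` —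
form a `k`-basis of `R(S_n) ⊗_ℤ k`, realized here as the space of `k`-valued class
functions via their characters; in particular its dimension is `p(n)`, the number of
partitions of `n`. -/
theorem inducedTrivial_basis_charZero (k : Type) [Field k] [CharZero k] (n : ℕ)
    (c : Nat.Partition n → Setoid (Fin n))
    (hc : ∀ σ : Setoid (Fin n), ∃! P : Nat.Partition n,
      ∃ w : Equiv.Perm (Fin n), permSetoid w σ = c P) :
    LinearIndependent k (fun P : Nat.Partition n => permChar k (c P)) ∧
      Submodule.span k (Set.range (fun P : Nat.Partition n => permChar k (c P))) =
        classFunctions k n ∧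
      Module.finrank k (classFunctions k n) = Nat.card (Nat.Partition n) := by
  have hind : LinearIndependent k fun P => permChar k (c P) :=
    linearIndependent_permChar fun P Q w h => ((hc (c P)).unique ⟨w, h⟩ ⟨1, permSetoid_one _⟩).symm
  have hle : Submodule.span k (Set.range fun P => permChar k (c P)) ≤ classFunctions k n :=
    Submodule.span_le.2 (Set.range_subset_iff.2 fun P => permChar_mem_classFunctions k (c P))
  have hfinrank : Module.finrank k (Submodule.span k (Set.range fun P => permChar k (c P))) =
      Nat.card (Nat.Partition n) := by
    rw [finrank_span_eq_card hind, Nat.card_eq_fintype_card]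
  have hspan := Submodule.eq_of_le_of_finrank_le hle <| by
    rw [hfinrank, finrank_classFunctions]
    simpa using card_conjClasses_le (α := Fin n)
  exact ⟨hind, hspan, hspan ▸ hfinrank⟩
end
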